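/- For the maximally entangled state |φ⁺⟩ = (|00⟩+|11⟩)/√2, measuring subsystem A in the eigenbasis of σ_x (resp. σ_y, σ_z) produces conditional states at B that are eigenstates of σ_x (resp. σ_y transposed, σ_z); consequently, choosing measurement bases {σ_x, σ_y, σ_z} on A and coherence bases M_1, M_2, M_3 each mutually unbiased to the corresponding conditional states' basis, the sum of average coherences Σ_{i,a} p(a|i) C_{M_i}(ρ_{B|i,a}) attains the value 3 > √6, so |φ⁺⟩ exhibits NAQC. -/

import Mathlib

open ComplexOrder Matrix Kronecker BigOperators

/-- l1-norm coherence of a qubit matrix χ in the basis m. -/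
noncomputable def cohIn (m : Fin 2 → Fin 2 → ℂ) (χ : Matrix (Fin 2) (Fin 2) ℂ) : ℝ :=
  ∑ i, ∑ j, if i ≠ j then ‖star (m i) ⬝ᵥ χ.mulVec (m j)‖ else 0

/-- m is an orthonormal basis of C². -/
def ONB (m : Fin 2 → Fin 2 → ℂ) : Prop :=
  ∀ i j, star (m i) ⬝ᵥ m j = if i = j then (1 : ℂ) else 0

/-- B is a triple of mutually unbiased orthonormal bases of C². -/
def MUBtriple (B : Fin 3 → Fin 2 → Fin 2 → ℂ) : Prop :=
  (∀ i, ONB (B i)) ∧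
  ∀ i j, i ≠ j → ∀ a b, ‖star (B i a) ⬝ᵥ B j b‖ ^ 2 = 1 / 2

/-- Unnormalized conditional state of B after outcome |u⟩⟨u| of a measurement on A:
p(u) ρ_{B|u} = Tr_A[(|u⟩⟨u| ⊗ I) ρ (|u⟩⟨u| ⊗ I)]. -/
noncomputable def condB (ρ : Matrix (Fin 2 × Fin 2) (Fin 2 × Fin 2) ℂ)
    (u : Fin 2 → ℂ) : Matrix (Fin 2) (Fin 2) ℂ :=
  Matrix.of fun b b' => ∑ a, ∑ a', (star (u a)) * ρ (a, b) (a', b') * u a'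

/-- Σ_{i,a} p(ρ_{B|Λᵢᵃ}) C_{Mᵢ}(ρ_{B|Λᵢᵃ}), written via unnormalized conditional
states (using the homogeneity p C(σ/p) = C(σ) of the l1-coherence). -/
noncomputable def naqcSum (ρ : Matrix (Fin 2 × Fin 2) (Fin 2 × Fin 2) ℂ)
    (M Λ : Fin 3 → Fin 2 → Fin 2 → ℂ) : ℝ :=
  ∑ i, ∑ a, cohIn (M i) (condB ρ (Λ i a))

/-- The NAQC functional N→, maximized over MUB triples of coherence bases and of
ensemble-generating measurement bases on A. -/
noncomputable def Nfwd (ρ : Matrix (Fin 2 × Fin 2) (Fin 2 × Fin 2) ℂ) : ℝ :=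
  sSup {s : ℝ | ∃ M Λ, MUBtriple M ∧ MUBtriple Λ ∧ s = naqcSum ρ M Λ}

/-- Partial trace over the first qubit. -/
noncomputable def ptraceA (ρ : Matrix (Fin 2 × Fin 2) (Fin 2 × Fin 2) ℂ) :
    Matrix (Fin 2) (Fin 2) ℂ :=
  Matrix.of fun b b' => ∑ a, ρ (a, b) (a, b')

/-- The eigenbases of σ_x, σ_y, σ_z. -/
noncomputable def pauliBases : Fin 3 → Fin 2 → Fin 2 → ℂ :=
  ![![![1 / (Real.sqrt 2 : ℂ), 1 / (Real.sqrt 2 : ℂ)],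
      ![1 / (Real.sqrt 2 : ℂ), -(1 / (Real.sqrt 2 : ℂ))]],
    ![![1 / (Real.sqrt 2 : ℂ), Complex.I / (Real.sqrt 2 : ℂ)],
      ![1 / (Real.sqrt 2 : ℂ), -(Complex.I / (Real.sqrt 2 : ℂ))]],
    ![![(1 : ℂ), 0], ![(0 : ℂ), 1]]]

/-- The maximally entangled state |φ⁺⟩⟨φ⁺|, |φ⁺⟩ = (|00⟩+|11⟩)/√2. -/
noncomputable def rhoPhiPlus : Matrix (Fin 2 × Fin 2) (Fin 2 × Fin 2) ℂ :=
  Matrix.of fun p q => if p.1 = p.2 ∧ q.1 = q.2 then (1 / 2 : ℂ) else 0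

/-!
Measuring A of |φ⁺⟩ with outcome u leaves B in ½ |ū⟩⟨ū|. Complex conjugation permutes each
Pauli eigenbasis, so every conditional state is an eigenstate of the measured Pauli matrix and
has l1-coherence 1 in the eigenbasis of either other Pauli matrix. Taking as coherence bases the
Pauli eigenbases shifted by one index, which again form a MUB triple, each of the six
(measurement, outcome) pairs contributes ½, for a total of 3 > √6.
-/

lemma cohIn_smul (m : Fin 2 → Fin 2 → ℂ) (c : ℂ) (χ : Matrix (Fin 2) (Fin 2) ℂ) :
    cohIn m (c • χ) = ‖c‖ * cohIn m χ := by
  simp only [cohIn, smul_mulVec, dotProduct_smul, smul_eq_mul, norm_mul, Finset.mul_sum,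
    mul_ite, mul_zero]

lemma cohIn_vecMulVec_star (m : Fin 2 → Fin 2 → ℂ) (w : Fin 2 → ℂ) :
    cohIn m (vecMulVec w (star w)) = 2 * (‖star (m 0) ⬝ᵥ w‖ * ‖star (m 1) ⬝ᵥ w‖) := by
  have hentry : ∀ i j, ‖star (m i) ⬝ᵥ vecMulVec w (star w) *ᵥ m j‖
      = ‖star (m i) ⬝ᵥ w‖ * ‖star (m j) ⬝ᵥ w‖ := by
    intro i j
    rw [vecMulVec_mulVec, op_smul_eq_smul, dotProduct_smul, smul_eq_mul, norm_mul,
      star_dotProduct w, norm_star, mul_comm]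
  simp only [cohIn, hentry, Fin.sum_univ_two, ne_eq, not_true_eq_false, not_false_eq_true,
    zero_ne_one, one_ne_zero, if_true, if_false, zero_add, add_zero]
  ring

lemma cohIn_vecMulVec_star_of_unbiased (m : Fin 2 → Fin 2 → ℂ) (w : Fin 2 → ℂ)
    (hw : ∀ k, ‖star (m k) ⬝ᵥ w‖ ^ 2 = 1 / 2) :
    cohIn m (vecMulVec w (star w)) = 1 := by
  have hprod : (‖star (m 0) ⬝ᵥ w‖ * ‖star (m 1) ⬝ᵥ w‖) ^ 2 = (1 / 2) ^ 2 := by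
    rw [mul_pow, hw, hw]; norm_num
  rw [cohIn_vecMulVec_star,
    (pow_left_inj₀ (by positivity) (by norm_num) two_ne_zero).1 hprod]
  norm_num

lemma MUBtriple.comp {B : Fin 3 → Fin 2 → Fin 2 → ℂ} (hB : MUBtriple B) {f : Fin 3 → Fin 3}
    (hf : Function.Injective f) : MUBtriple (B ∘ f) :=
  ⟨fun i => hB.1 (f i), fun _ _ hij => hB.2 _ _ (hf.ne hij)⟩

lemma condB_rhoPhiPlus (u : Fin 2 → ℂ) :
    condB rhoPhiPlus u = (1 / 2 : ℂ) • Matrix.of (fun b b' => star (u b) * u b') := by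
  ext b b'
  fin_cases b <;> fin_cases b' <;> simp [condB, rhoPhiPlus, Fin.sum_univ_two] <;> ring

lemma condB_rhoPhiPlus_eq_vecMulVec (u : Fin 2 → ℂ) :
    condB rhoPhiPlus u = (1 / 2 : ℂ) • vecMulVec (star u) (star (star u)) := by
  rw [condB_rhoPhiPlus, star_star]
  rfl

lemma cohIn_condB_rhoPhiPlus_of_unbiased (m : Fin 2 → Fin 2 → ℂ) (u : Fin 2 → ℂ)
    (hu : ∀ k, ‖star (m k) ⬝ᵥ star u‖ ^ 2 = 1 / 2) :
    cohIn m (condB rhoPhiPlus u) = 1 / 2 := by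
  rw [condB_rhoPhiPlus_eq_vecMulVec, cohIn_smul, cohIn_vecMulVec_star_of_unbiased _ _ hu]
  norm_num

lemma ofReal_sqrt_two_sq : (Real.sqrt 2 : ℂ) ^ 2 = 2 := by
  rw [← Complex.ofReal_pow, Real.sq_sqrt zero_le_two, Complex.ofReal_ofNat]

lemma star_pauliBases (i : Fin 3) (a : Fin 2) :
    star (pauliBases i a) = pauliBases i (if i = 1 then a + 1 else a) := by
  ext k
  fin_cases i <;> fin_cases a <;> fin_cases k <;> simp [pauliBases, neg_div]

lemma mubTriple_pauliBases : MUBtriple pauliBases := by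
  constructor
  · intro i a b
    fin_cases i <;> fin_cases a <;> fin_cases b <;>
      simp [pauliBases, dotProduct, Fin.sum_univ_two, Complex.conj_ofReal] <;>
      ring_nf <;> simp [ofReal_sqrt_two_sq] <;> norm_num
  · intro i j hij a b
    fin_cases i <;> fin_cases j <;> (try exact absurd rfl hij) <;>
      fin_cases a <;> fin_cases b <;>
      simp [pauliBases, dotProduct, Fin.sum_univ_two, Complex.conj_ofReal] <;>
      ring_nf <;> simp [Complex.sq_norm, Complex.normSq_apply, ofReal_sqrt_two_sq] <;> norm_num

-- The conditional state is an eigenstate of the same Pauli matrix, so unbiased to the next one.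
lemma cohIn_condB_rhoPhiPlus_pauliBases (i : Fin 3) (a : Fin 2) :
    cohIn (pauliBases (i + 2)) (condB rhoPhiPlus (pauliBases i a)) = 1 / 2 := by
  refine cohIn_condB_rhoPhiPlus_of_unbiased _ _ fun k => ?_
  rw [star_pauliBases i a]
  exact mubTriple_pauliBases.2 _ _ (by simp) _ _

theorem phi_plus_exhibits_naqc :
    MUBtriple pauliBases ∧
    (∀ i a, condB rhoPhiPlus (pauliBases i a)
        = (1 / 2 : ℂ) • Matrix.of (fun b b' =>
            star (pauliBases i a b) * pauliBases i a b')) ∧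
    condB rhoPhiPlus (pauliBases 2 0) = !![(1 / 2 : ℂ), 0; 0, 0] ∧
    condB rhoPhiPlus (pauliBases 2 1) = !![(0 : ℂ), 0; 0, (1 / 2 : ℂ)] ∧
    (∃ M, MUBtriple M ∧ naqcSum rhoPhiPlus M pauliBases = 3) ∧
    Real.sqrt 6 < 3 := by
  refine ⟨mubTriple_pauliBases, fun i a => condB_rhoPhiPlus _, ?_, ?_,
    ⟨pauliBases ∘ (· + 2), mubTriple_pauliBases.comp (add_left_injective 2), ?_⟩,
    (Real.sqrt_lt' three_pos).2 (by norm_num)⟩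
  · ext b b'; fin_cases b <;> fin_cases b' <;> simp [condB_rhoPhiPlus, pauliBases]
  · ext b b'; fin_cases b <;> fin_cases b' <;> simp [condB_rhoPhiPlus, pauliBases]
  · simp only [naqcSum, Function.comp_apply, cohIn_condB_rhoPhiPlus_pauliBases]
    norm_num
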